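/- Let S be an m×m real symmetric positive semidefinite matrix all of whose eigenvalues are at most 1, and let P be an m×m real symmetric matrix with P·P = P, such that S·P = P and the eigenspace {x ∈ ℝ^m : Sx = x} equals the column space of P. Then every eigenvalue of the symmetric matrix S − P is strictly less than 1; in particular λ_max(S − P) < 1. -/

import Mathlib

/-!
Since `P S = P` (transpose `S P = P`) and `P² = P`, we get `P (S - P) = 0`. Hence an eigenvector
`x` of `S - P` for an eigenvalue `μ ≠ 0` satisfies `P x = 0`, so `S x = μ x` and `μ ≤ 1`.
If `μ = 1`, then `x` lies in the `1`-eigenspace of `S`, i.e. in the range of `P`, so `x = P x = 0`.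
-/

open Matrix

namespace Matrix

variable {K n : Type*} [Field K] [Fintype n] [DecidableEq n]

theorem mem_spectrum_iff_exists_mulVec_eq_smul {A : Matrix n n K} {μ : K} :
    μ ∈ spectrum K A ↔ ∃ x ≠ 0, A *ᵥ x = μ • x := by
  rw [← spectrum_toLin', ← Module.End.hasEigenvalue_iff_mem_spectrum,
    Module.End.hasEigenvalue_iff, Submodule.ne_bot_iff]
  simp only [Module.End.mem_eigenspace_iff, toLin'_apply]
  exact ⟨fun ⟨x, hx, hx0⟩ => ⟨x, hx0, hx⟩, fun ⟨x, hx0, hx⟩ => ⟨x, hx, hx0⟩⟩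

theorem spectrum_sub_diff_zero_subset {S P : Matrix n n K} (hPS : P * S = P) (hPP : P * P = P)
    (hfix : {x | S *ᵥ x = x} ⊆ Set.range P.mulVec) :
    spectrum K (S - P) \ {0} ⊆ spectrum K S \ {1} := by
  rintro μ ⟨hμ, hμ0 : μ ≠ 0⟩
  obtain ⟨x, hx0, hx⟩ := mem_spectrum_iff_exists_mulVec_eq_smul.1 hμ
  have hPx : P *ᵥ x = 0 := by
    have hP_SP : P * (S - P) = 0 := by rw [Matrix.mul_sub, hPS, hPP, sub_self]
    have : μ • P *ᵥ x = 0 := by rw [← mulVec_smul, ← hx, mulVec_mulVec, hP_SP, zero_mulVec]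
    exact (smul_eq_zero.1 this).resolve_left hμ0
  have hSx : S *ᵥ x = μ • x := by rwa [sub_mulVec, hPx, sub_zero] at hx
  refine ⟨mem_spectrum_iff_exists_mulVec_eq_smul.2 ⟨x, hx0, hSx⟩, fun hμ1 => hx0 ?_⟩
  obtain ⟨y, rfl⟩ := hfix (show S *ᵥ x = x by rw [hSx, hμ1, one_smul])
  rwa [mulVec_mulVec, hPP] at hPx

end Matrix

theorem Real.sSup_lt_of_finite {s : Set ℝ} {a : ℝ} (hs : s.Finite) (ha : 0 < a)
    (h : ∀ x ∈ s, x < a) : sSup s < a := by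
  rcases s.eq_empty_or_nonempty with rfl | hne
  · rwa [Real.sSup_empty]
  · exact (hs.csSup_lt_iff hne).2 h

theorem lambdaMax_S_sub_P_lt_one_general
    (m : ℕ) (S P : Matrix (Fin m) (Fin m) ℝ)
    (hSsymm : Sᵀ = S)
    (hSle : ∀ lam ∈ spectrum ℝ S, lam ≤ 1)
    (hPsymm : Pᵀ = P) (hPidem : P * P = P)
    (hSP : S * P = P)
    (heig : {x : Fin m → ℝ | S.mulVec x = x} = Set.range P.mulVec) :
    (∀ mu ∈ spectrum ℝ (S - P), mu < 1) ∧ sSup (spectrum ℝ (S - P)) < 1 := by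
  have hPS : P * S = P := by
    simpa only [transpose_mul, hSsymm, hPsymm] using congrArg transpose hSP
  have hlt : ∀ mu ∈ spectrum ℝ (S - P), mu < 1 := by
    intro mu hmu
    by_cases hmu0 : mu = 0
    · rw [hmu0]; exact one_pos
    obtain ⟨hmuS, hmu1⟩ := spectrum_sub_diff_zero_subset hPS hPidem heig.subset ⟨hmu, hmu0⟩
    exact lt_of_le_of_ne (hSle mu hmuS) hmu1
  exact ⟨hlt, Real.sSup_lt_of_finite (finite_spectrum _) one_pos hlt⟩

/-- If `S` is symmetric PSD with all eigenvalues at most `1`, `P` is a symmetric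
idempotent with `S P = P` whose column space equals the `1`-eigenspace of `S`, then
every eigenvalue of `S − P` is strictly less than `1`; in particular
`λ_max(S − P) < 1`. -/
theorem lambdaMax_S_sub_P_lt_one
    (m : ℕ) (hm : 0 < m) (S P : Matrix (Fin m) (Fin m) ℝ)
    (hSsymm : Sᵀ = S) (hSpsd : ∀ x : Fin m → ℝ, 0 ≤ dotProduct x (S.mulVec x))
    (hSle : ∀ lam ∈ spectrum ℝ S, lam ≤ 1)
    (hPsymm : Pᵀ = P) (hPidem : P * P = P)
    (hSP : S * P = P)
    (heig : {x : Fin m → ℝ | S.mulVec x = x} = Set.range P.mulVec) :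
    (∀ mu ∈ spectrum ℝ (S - P), mu < 1) ∧ sSup (spectrum ℝ (S - P)) < 1 :=
  lambdaMax_S_sub_P_lt_one_general m S P hSsymm hSle hPsymm hPidem hSP heig
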